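/- Let L > 0, s := (1+√2)/2, and let v ∈ ℤ⁴ satisfy p(v) ∈ B_L(0) and κ(v) ∈ 2R. Then v₁ ∈ (−L/2 − s, L/2 + s), v₃ ∈ (−L/2 − s, L/2 + s), |v₂ − a(v₁ + v₃)| ≤ 1 + √2, and |v₄ − a(v₃ − v₁)| ≤ 1 + √2. -/
import Mathlib


noncomputable section

/-- `a = 1/√2`. -/
def aAB : ℝ := 1 / Real.sqrt 2

/-- `c = (1+√2)/2`, half the diameter (in each of the 8 directions) of the regular
axis-aligned octagon of side length 1. -/
def cAB : ℝ := (1 + Real.sqrt 2) / 2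

/-- The "physical space" projection `p : ℝ⁴ → ℝ²` with matrix `((1,a,0,-a),(0,a,1,a))`.
(ℝ² is modelled as `ℝ × ℝ`, which carries the sup norm.) -/
def pAB (v : Fin 4 → ℝ) : ℝ × ℝ :=
  (v 0 + aAB * v 1 - aAB * v 3, aAB * v 1 + v 2 + aAB * v 3)

/-- The "internal space" projection `κ : ℝ⁴ → ℝ²` with matrix `((1,-a,0,a),(0,a,-1,a))`. -/
def kAB (v : Fin 4 → ℝ) : ℝ × ℝ :=
  (v 0 - aAB * v 1 + aAB * v 3, aAB * v 1 - v 2 + aAB * v 3)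

/-- The acceptance region: the closed regular axis-aligned octagon with side length 1
centered at 0. -/
def Roct : Set (ℝ × ℝ) :=
  { x | |x.1| ≤ cAB ∧ |x.2| ≤ cAB ∧
        |x.1 + x.2| ≤ Real.sqrt 2 * cAB ∧ |x.1 - x.2| ≤ Real.sqrt 2 * cAB }

/-- The doubled octagon `2R`. -/
def twoRoct : Set (ℝ × ℝ) := (fun x : ℝ × ℝ => (2 : ℝ) • x) '' Roct

/-- The Ammann–Beenker point set `Γ_AB = { p(z) : z ∈ ℤ⁴, κ(z) ∈ R }`. -/
def ABSet : Set (ℝ × ℝ) :=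
  { x | ∃ z : Fin 4 → ℤ, kAB (fun i => (z i : ℝ)) ∈ Roct ∧ pAB (fun i => (z i : ℝ)) = x }

/-- Coordinate bounds for candidate points of the Ammann–Beenker tiling: if `v ∈ ℤ⁴`
satisfies `p(v) ∈ B_L(0)` and `κ(v) ∈ 2R`, then (with `s = (1+√2)/2`) the coordinates
`v₁, v₃` lie in `(-L/2 - s, L/2 + s)`, while `|v₂ - a(v₁+v₃)| ≤ 1 + √2` and
`|v₄ - a(v₃-v₁)| ≤ 1 + √2`. -/
theorem AB_candidate_coordinate_bounds (L : ℝ) (hL : 0 < L) (v : Fin 4 → ℤ)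
    (hp : pAB (fun i => (v i : ℝ)) ∈ Metric.ball (0 : ℝ × ℝ) L)
    (hκ : kAB (fun i => (v i : ℝ)) ∈ twoRoct) :
    (v 0 : ℝ) ∈ Set.Ioo (-(L / 2) - (1 + Real.sqrt 2) / 2) (L / 2 + (1 + Real.sqrt 2) / 2) ∧
    (v 2 : ℝ) ∈ Set.Ioo (-(L / 2) - (1 + Real.sqrt 2) / 2) (L / 2 + (1 + Real.sqrt 2) / 2) ∧
    |(v 1 : ℝ) - aAB * ((v 0 : ℝ) + (v 2 : ℝ))| ≤ 1 + Real.sqrt 2 ∧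
    |(v 3 : ℝ) - aAB * ((v 2 : ℝ) - (v 0 : ℝ))| ≤ 1 + Real.sqrt 2 := by
  have hs2 : Real.sqrt 2 ^ 2 = 2 := Real.sq_sqrt (by norm_num)
  have hs1 : (1:ℝ) < Real.sqrt 2 := by nlinarith [Real.sqrt_nonneg 2]
  have has : aAB * Real.sqrt 2 = 1 := by rw [aAB]; field_simp
  have ha2 : aAB * aAB = 1/2 := by nlinarith [has, hs2]
  have hapos : 0 < aAB := by rw [aAB]; positivity
  rw [Metric.mem_ball, dist_zero_right, Prod.norm_def] at hp
  simp only [Real.norm_eq_abs, max_lt_iff] at hp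
  obtain ⟨hp1, hp2⟩ := hp
  rw [pAB] at hp1 hp2
  simp only at hp1 hp2
  obtain ⟨u, ⟨h1, h2, h3, h4⟩, heq⟩ := hκ
  have hk1 : (2:ℝ) * u.1 = (v 0 : ℝ) - aAB * (v 1) + aAB * (v 3) := by
    have := congrArg Prod.fst heq
    simpa [kAB, Prod.smul_def, smul_eq_mul] using this
  have hk2 : (2:ℝ) * u.2 = aAB * (v 1) - (v 2) + aAB * (v 3) := by
    have := congrArg Prod.snd heq
    simpa [kAB, Prod.smul_def, smul_eq_mul] using this
  rw [abs_lt] at hp1 hp2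
  rw [abs_le, cAB] at h1 h2
  have key : 2 * aAB * (Real.sqrt 2 * cAB) = 1 + Real.sqrt 2 := by
    rw [cAB]; linear_combination (1 + Real.sqrt 2) * has
  refine ⟨⟨by linarith [hp1.1, h1.1], by linarith [hp1.2, h1.2]⟩,
      ⟨by linarith [hp2.1, h2.2], by linarith [hp2.2, h2.1]⟩, ?_, ?_⟩
  · have e1 : (v 1 : ℝ) - aAB * ((v 0 : ℝ) + (v 2 : ℝ)) = -(2 * aAB * (u.1 - u.2)) := by
      linear_combination aAB * hk1 - aAB * hk2 - 2 * (v 1 : ℝ) * ha2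
    rw [e1, abs_neg, abs_mul, abs_of_pos (by positivity : (0:ℝ) < 2 * aAB), ← key]
    exact mul_le_mul_of_nonneg_left h4 (by positivity)
  · have e2 : (v 3 : ℝ) - aAB * ((v 2 : ℝ) - (v 0 : ℝ)) = 2 * aAB * (u.1 + u.2) := by
      linear_combination -aAB * hk1 - aAB * hk2 - 2 * (v 3 : ℝ) * ha2
    rw [e2, abs_mul, abs_of_pos (by positivity : (0:ℝ) < 2 * aAB), ← key]
    exact mul_le_mul_of_nonneg_left h3 (by positivity)

end
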